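/- There exists ε₀ > 0 such that for every ε ∈ (0, ε₀], the function N_ε : ℝ² × ℝ → ℝ defined by N_ε(x₁,x₂) = max(‖x₁‖, ε·|x₂|^{1/2}), where ‖·‖ is the Euclidean norm on ℝ², satisfies: N_ε(p*q) ≤ N_ε(p) + N_ε(q) for all p, q ∈ ℝ² × ℝ, where * is the Heisenberg product; moreover N_ε(λx₁, λ²x₂) = λ·N_ε(x₁,x₂) for all λ > 0, and N_ε(p) = 0 if and only if p = 0. Hence N_ε is a homogeneous norm on the first Heisenberg group. -/

import Mathlib

/-- The standard symplectic form `ω((a,b),(c,d)) = ad - bc` on `ℝ²`. -/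
noncomputable def heisOmega (a b : ℝ × ℝ) : ℝ := a.1 * b.2 - a.2 * b.1

/-- The Euclidean norm on `ℝ²`. -/
noncomputable def enorm2 (a : ℝ × ℝ) : ℝ := Real.sqrt (a.1 ^ 2 + a.2 ^ 2)

/-- The group product of the first Heisenberg group `ℝ² × ℝ`. -/
noncomputable def heisMul (p q : (ℝ × ℝ) × ℝ) : (ℝ × ℝ) × ℝ :=
  (p.1 + q.1, p.2 + q.2 + 2 * heisOmega p.1 q.1)

/-- The smooth-box norm `N_ε(x₁,x₂) = max(‖x₁‖, ε|x₂|^{1/2})`. -/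
noncomputable def Neps (ε : ℝ) (x : (ℝ × ℝ) × ℝ) : ℝ :=
  max (enorm2 x.1) (ε * Real.sqrt |x.2|)

lemma enorm2_nonneg (a : ℝ × ℝ) : 0 ≤ enorm2 a := Real.sqrt_nonneg _

lemma cs_key (a b : ℝ × ℝ) : (enorm2 a * enorm2 b)^2 = (a.1^2+a.2^2)*(b.1^2+b.2^2) := by
  rw [mul_pow, enorm2, enorm2, Real.sq_sqrt (by positivity), Real.sq_sqrt (by positivity)]

lemma enorm2_triangle (a b : ℝ × ℝ) : enorm2 (a + b) ≤ enorm2 a + enorm2 b := by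
  have h1 : 0 ≤ enorm2 a + enorm2 b := add_nonneg (enorm2_nonneg a) (enorm2_nonneg b)
  have sa : (enorm2 a) ^ 2 = a.1 ^ 2 + a.2 ^ 2 := Real.sq_sqrt (by positivity)
  have sb : (enorm2 b) ^ 2 = b.1 ^ 2 + b.2 ^ 2 := Real.sq_sqrt (by positivity)
  have key : a.1 * b.1 + a.2 * b.2 ≤ enorm2 a * enorm2 b := by
    nlinarith [cs_key a b, sq_nonneg (a.1*b.2 - a.2*b.1),
      mul_nonneg (enorm2_nonneg a) (enorm2_nonneg b),
      sq_nonneg (enorm2 a * enorm2 b - (a.1*b.1+a.2*b.2)),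
      sq_nonneg (enorm2 a * enorm2 b + (a.1*b.1+a.2*b.2))]
  rw [enorm2, show (a+b).1 = a.1+b.1 from rfl, show (a+b).2 = a.2+b.2 from rfl]
  calc Real.sqrt ((a.1+b.1)^2 + (a.2+b.2)^2) ≤ Real.sqrt ((enorm2 a + enorm2 b)^2) :=
        Real.sqrt_le_sqrt (by nlinarith)
  _ = enorm2 a + enorm2 b := Real.sqrt_sq h1

lemma omega_le (a b : ℝ × ℝ) : |heisOmega a b| ≤ enorm2 a * enorm2 b := by
  have h : 0 ≤ enorm2 a * enorm2 b := mul_nonneg (enorm2_nonneg a) (enorm2_nonneg b)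
  rw [abs_le, heisOmega]
  constructor <;>
    nlinarith [cs_key a b, sq_nonneg (a.1*b.1 + a.2*b.2),
      sq_nonneg (enorm2 a * enorm2 b - (a.1*b.2 - a.2*b.1)),
      sq_nonneg (enorm2 a * enorm2 b + (a.1*b.2 - a.2*b.1))]

/-- There is `ε₀ > 0` such that for every `ε ∈ (0, ε₀]`, the
smooth-box norm `N_ε(x₁,x₂) = max(‖x₁‖, ε|x₂|^{1/2})` is subadditive for the
Heisenberg product, homogeneous for the Heisenberg dilations, and vanishes exactly
at the identity; hence it is a homogeneous norm on the first Heisenberg group. -/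
theorem statement_19 :
    ∃ ε₀ : ℝ, 0 < ε₀ ∧ ∀ ε : ℝ, 0 < ε → ε ≤ ε₀ →
      (∀ p q : (ℝ × ℝ) × ℝ, Neps ε (heisMul p q) ≤ Neps ε p + Neps ε q) ∧
      (∀ c : ℝ, 0 < c → ∀ x₁ : ℝ × ℝ, ∀ x₂ : ℝ,
        Neps ε (c • x₁, c ^ 2 * x₂) = c * Neps ε (x₁, x₂)) ∧
      (∀ p : (ℝ × ℝ) × ℝ, Neps ε p = 0 ↔ p = 0) := by
  refine ⟨1, one_pos, fun ε hε hε1 => ⟨?_, ?_, ?_⟩⟩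
  · intro p q
    set a := Neps ε p with ha
    set b := Neps ε q with hb
    have ha1 : enorm2 p.1 ≤ a := le_max_left _ _
    have ha2 : ε * Real.sqrt |p.2| ≤ a := le_max_right _ _
    have hb1 : enorm2 q.1 ≤ b := le_max_left _ _
    have hb2 : ε * Real.sqrt |q.2| ≤ b := le_max_right _ _
    have han : 0 ≤ a := le_trans (enorm2_nonneg _) ha1
    have hbn : 0 ≤ b := le_trans (enorm2_nonneg _) hb1
    have hsp : (ε * Real.sqrt |p.2|)^2 = ε^2 * |p.2| := by
      rw [mul_pow, Real.sq_sqrt (abs_nonneg _)]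
    have hsq : (ε * Real.sqrt |q.2|)^2 = ε^2 * |q.2| := by
      rw [mul_pow, Real.sq_sqrt (abs_nonneg _)]
    have hp2 : ε^2 * |p.2| ≤ a^2 := by
      rw [← hsp]; exact pow_le_pow_left₀ (by positivity) ha2 2
    have hq2 : ε^2 * |q.2| ≤ b^2 := by
      rw [← hsq]; exact pow_le_pow_left₀ (by positivity) hb2 2
    rw [Neps]
    apply max_le
    · calc enorm2 (heisMul p q).1 = enorm2 (p.1 + q.1) := rfl
      _ ≤ enorm2 p.1 + enorm2 q.1 := enorm2_triangle _ _
      _ ≤ a + b := add_le_add ha1 hb1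
    · have habs : |(heisMul p q).2| ≤ |p.2| + |q.2| + 2 * (enorm2 p.1 * enorm2 q.1) := by
        calc |(heisMul p q).2| = |p.2 + q.2 + 2 * heisOmega p.1 q.1| := rfl
        _ ≤ |p.2| + |q.2| + |2 * heisOmega p.1 q.1| := by
            exact le_trans (abs_add_le _ _) (add_le_add_left (abs_add_le _ _) _)
        _ ≤ |p.2| + |q.2| + 2 * (enorm2 p.1 * enorm2 q.1) := by
            rw [abs_mul, abs_two]
            exact add_le_add_right (by linarith [omega_le p.1 q.1]) _
      have hee : ε^2 * (enorm2 p.1 * enorm2 q.1) ≤ a * b := by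
        have h1 : ε^2 ≤ 1 := by nlinarith
        have h2 : enorm2 p.1 * enorm2 q.1 ≤ a * b :=
          mul_le_mul ha1 hb1 (enorm2_nonneg _) han
        nlinarith [mul_nonneg (enorm2_nonneg p.1) (enorm2_nonneg q.1)]
      have hfin : ε^2 * |(heisMul p q).2| ≤ (a + b)^2 := by nlinarith
      calc ε * Real.sqrt |(heisMul p q).2| = Real.sqrt (ε^2 * |(heisMul p q).2|) := by
            rw [Real.sqrt_mul (by positivity), Real.sqrt_sq hε.le]
      _ ≤ Real.sqrt ((a + b)^2) := Real.sqrt_le_sqrt hfin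
      _ = a + b := Real.sqrt_sq (by linarith)
  · intro c hc x₁ x₂
    have h1 : enorm2 (c • x₁) = c * enorm2 x₁ := by
      rw [enorm2, enorm2, show (c • x₁).1 = c * x₁.1 from rfl,
        show (c • x₁).2 = c * x₁.2 from rfl,
        show (c * x₁.1)^2 + (c * x₁.2)^2 = c^2 * (x₁.1^2 + x₁.2^2) by ring,
        Real.sqrt_mul (by positivity), Real.sqrt_sq hc.le]
    have h2 : ε * Real.sqrt |c^2 * x₂| = c * (ε * Real.sqrt |x₂|) := by
      rw [abs_mul, abs_of_nonneg (by positivity : (0:ℝ) ≤ c^2),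
        Real.sqrt_mul (by positivity), Real.sqrt_sq hc.le]
      ring
    rw [Neps, Neps, h1, h2, mul_max_of_nonneg _ _ hc.le]
  · intro p
    constructor
    · intro h
      have h1 : enorm2 p.1 = 0 :=
        le_antisymm (h ▸ le_max_left _ _) (enorm2_nonneg _)
      have h2 : ε * Real.sqrt |p.2| = 0 :=
        le_antisymm (h ▸ le_max_right _ _) (by positivity)
      have hx : p.1.1^2 + p.1.2^2 = 0 := by
        have := Real.sqrt_eq_zero (by positivity) |>.mp h1
        exact this
      have hp11 : p.1.1 = 0 := by nlinarith [sq_nonneg p.1.1, sq_nonneg p.1.2]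
      have hp12 : p.1.2 = 0 := by nlinarith [sq_nonneg p.1.1, sq_nonneg p.1.2]
      have hs : Real.sqrt |p.2| = 0 := by
        rcases mul_eq_zero.mp h2 with h | h
        · exact absurd h hε.ne'
        · exact h
      have hp2 : p.2 = 0 := by
        have := Real.sqrt_eq_zero (abs_nonneg _) |>.mp hs
        exact abs_eq_zero.mp this
      exact Prod.ext (Prod.ext hp11 hp12) hp2
    · rintro rfl
      simp [Neps, enorm2]
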